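/- arXiv:1007.1894 — 6 statements merged into one kernel-verified Lean document; each statement's English description precedes it below -/
import Mathlib

section
/- Let g : (0,∞) → ℝ, g_min ∈ ℝ with g(r) ≥ g_min for all r > 0, let θ₁ ∈ ℝ, and let η, φ ⊂ ℝ² be finite sets with η ∩ φ = ∅. Set K = #η, V(η|φ) := θ₁K + E_g(η ∪ φ) − E_g(φ), and for x ∈ η set V(x|φ) := θ₁ + E_g({x} ∪ φ) − E_g(φ). Then exp(−V(η|φ)) ≤ exp(−(K(K−1)/2)·g_min) · ∏_{x ∈ η} exp(−V(x|φ)). -/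
noncomputable def euclNorm (x : ℝ × ℝ) : ℝ := Real.sqrt (x.1 ^ 2 + x.2 ^ 2)

noncomputable def pairEnergy (g : ℝ → ℝ) (S : Finset (ℝ × ℝ)) : ℝ :=
  (∑ a ∈ S, ∑ b ∈ S, if a = b then 0 else g (euclNorm (a - b))) / 2

lemma euclNorm_symm (a b : ℝ × ℝ) : euclNorm (a - b) = euclNorm (b - a) := by
  unfold euclNorm
  congr 1
  simp [Prod.fst_sub, Prod.snd_sub]
  ring

lemma euclNorm_sub_pos {a b : ℝ × ℝ} (h : a ≠ b) : 0 < euclNorm (a - b) := by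
  have hne : a - b ≠ 0 := sub_ne_zero.mpr h
  have h12 : (a - b).1 ≠ 0 ∨ (a - b).2 ≠ 0 := by
    by_contra hc; push_neg at hc
    exact hne (Prod.ext hc.1 hc.2)
  unfold euclNorm
  apply Real.sqrt_pos.mpr
  rcases h12 with h1 | h2
  · have := lt_of_le_of_ne (sq_nonneg (a - b).1) (Ne.symm (pow_ne_zero 2 h1))
    nlinarith [sq_nonneg (a - b).2]
  · have := lt_of_le_of_ne (sq_nonneg (a - b).2) (Ne.symm (pow_ne_zero 2 h2))
    nlinarith [sq_nonneg (a - b).1]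

lemma pairEnergy_union (g : ℝ → ℝ) (η φ : Finset (ℝ × ℝ)) (hdisj : Disjoint η φ) :
    pairEnergy g (η ∪ φ) = pairEnergy g η + pairEnergy g φ +
      ∑ a ∈ η, ∑ b ∈ φ, g (euclNorm (a - b)) := by
  unfold pairEnergy
  rw [Finset.sum_union hdisj]
  simp_rw [Finset.sum_union hdisj]
  have hcross : ∀ a ∈ η, ∀ b ∈ φ, (if a = b then (0:ℝ) else g (euclNorm (a - b))) = g (euclNorm (a - b)) := by
    intro a ha b hb
    have : a ≠ b := by
      rintro rfl
      exact (Finset.disjoint_left.mp hdisj ha) hb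
    rw [if_neg this]
  have h1 : ∑ a ∈ η, ∑ b ∈ φ, (if a = b then (0:ℝ) else g (euclNorm (a - b)))
      = ∑ a ∈ η, ∑ b ∈ φ, g (euclNorm (a - b)) :=
    Finset.sum_congr rfl fun a ha => Finset.sum_congr rfl fun b hb => hcross a ha b hb
  have h2 : ∑ b ∈ φ, ∑ a ∈ η, (if b = a then (0:ℝ) else g (euclNorm (b - a)))
      = ∑ a ∈ η, ∑ b ∈ φ, g (euclNorm (a - b)) := by
    rw [Finset.sum_comm]
    refine Finset.sum_congr rfl fun a ha => Finset.sum_congr rfl fun b hb => ?_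
    have : b ≠ a := by
      rintro rfl
      exact (Finset.disjoint_left.mp hdisj ha) hb
    rw [if_neg this, euclNorm_symm]
  rw [Finset.sum_add_distrib, Finset.sum_add_distrib, h1, h2]
  ring

lemma pairEnergy_insert (g : ℝ → ℝ) (x : ℝ × ℝ) (φ : Finset (ℝ × ℝ)) (hx : x ∉ φ) :
    pairEnergy g (insert x φ) = pairEnergy g φ + ∑ b ∈ φ, g (euclNorm (x - b)) := by
  have hd : Disjoint {x} φ := Finset.disjoint_singleton_left.mpr hx
  have : insert x φ = {x} ∪ φ := rfl
  rw [this, pairEnergy_union g {x} φ hd]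
  have hone : pairEnergy g {x} = 0 := by
    unfold pairEnergy
    simp
  rw [hone]
  simp

lemma pairEnergy_lower (g : ℝ → ℝ) (gmin : ℝ) (hg : ∀ r > (0:ℝ), gmin ≤ g r)
    (η : Finset (ℝ × ℝ)) :
    (η.card : ℝ) * ((η.card : ℝ) - 1) / 2 * gmin ≤ pairEnergy g η := by
  unfold pairEnergy
  have key : ∑ a ∈ η, ∑ b ∈ η, (if a = b then (0:ℝ) else gmin)
      ≤ ∑ a ∈ η, ∑ b ∈ η, (if a = b then (0:ℝ) else g (euclNorm (a - b))) := by
    refine Finset.sum_le_sum fun a _ => Finset.sum_le_sum fun b _ => ?_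
    by_cases h : a = b
    · simp [h]
    · rw [if_neg h, if_neg h]
      exact hg _ (euclNorm_sub_pos h)
  have hcount : ∑ a ∈ η, ∑ b ∈ η, (if a = b then (0:ℝ) else gmin)
      = (η.card : ℝ) * ((η.card : ℝ) - 1) * gmin := by
    have : ∀ a ∈ η, ∑ b ∈ η, (if a = b then (0:ℝ) else gmin) = (η.card : ℝ) * gmin - gmin := by
      intro a ha
      have : ∑ b ∈ η, (if a = b then (0:ℝ) else gmin)
          = ∑ b ∈ η, (gmin - if a = b then gmin else 0) := by
        refine Finset.sum_congr rfl fun b _ => ?_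
        by_cases h : a = b <;> simp [h]
      rw [this, Finset.sum_sub_distrib, Finset.sum_const, Finset.sum_ite_eq η a (fun _ => gmin), if_pos ha]
      simp [nsmul_eq_mul]
    rw [Finset.sum_congr rfl this, Finset.sum_const, nsmul_eq_mul]
    ring
  have heq : (η.card : ℝ) * ((η.card : ℝ) - 1) / 2 * gmin
      = (∑ a ∈ η, ∑ b ∈ η, (if a = b then (0:ℝ) else gmin)) / 2 := by
    rw [hcount]; ring
  rw [heq]
  linarith [key]

theorem stmt2 (g : ℝ → ℝ) (gmin : ℝ) (hg : ∀ r > (0 : ℝ), gmin ≤ g r) (θ₁ : ℝ)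
    (η φ : Finset (ℝ × ℝ)) (hdisj : Disjoint η φ) :
    Real.exp (-(θ₁ * (η.card : ℝ) + pairEnergy g (η ∪ φ) - pairEnergy g φ)) ≤
      Real.exp (-((η.card : ℝ) * ((η.card : ℝ) - 1) / 2 * gmin)) *
        ∏ x ∈ η, Real.exp (-(θ₁ + pairEnergy g (insert x φ) - pairEnergy g φ)) := by
  rw [← Real.exp_sum, ← Real.exp_add, Real.exp_le_exp]
  have hins : ∑ x ∈ η, -(θ₁ + pairEnergy g (insert x φ) - pairEnergy g φ)
      = -((η.card : ℝ) * θ₁) - ∑ x ∈ η, ∑ b ∈ φ, g (euclNorm (x - b)) := by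
    have h1 : ∀ x ∈ η, -(θ₁ + pairEnergy g (insert x φ) - pairEnergy g φ)
        = -θ₁ - ∑ b ∈ φ, g (euclNorm (x - b)) := by
      intro x hx
      rw [pairEnergy_insert g x φ (Finset.disjoint_left.mp hdisj hx)]
      ring
    rw [Finset.sum_congr rfl h1, Finset.sum_sub_distrib, Finset.sum_const, nsmul_eq_mul]
    ring
  rw [hins, pairEnergy_union g η φ hdisj]
  have := pairEnergy_lower g gmin hg η
  linarith
end

section
/- Let θ₂, θ₃, θ₂*, θ₃* > 0 and let 0 < ε < (θ₃*/θ₃)¹² · (θ₂*/θ₂). Then the function r ↦ g(r; θ₂*, θ₃*) − ε·|g(r; θ₂, θ₃)| on (0,∞) is lower regular. -/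
/-- The Lennard-Jones pair potential with parameters θ₂, θ₃. -/
noncomputable def gLJ (θ₂ θ₃ r : ℝ) : ℝ := 4 * θ₂ * ((θ₃ / r) ^ 12 - (θ₃ / r) ^ 6)


/-- A function `f` on `(0,∞)` is lower regular if it is bounded below by `-ψ` for
some positive nonincreasing function `ψ` with `∫₀^∞ r·ψ(r) dr < ∞`. -/
def LowerRegular (f : ℝ → ℝ) : Prop :=
  ∃ ψ : ℝ → ℝ, (∀ r > (0 : ℝ), 0 < ψ r) ∧ AntitoneOn ψ (Set.Ioi 0) ∧
    MeasureTheory.IntegrableOn (fun r => r * ψ r) (Set.Ioi 0) ∧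
    ∀ r > (0 : ℝ), -ψ r ≤ f r

/-!
Since `|g(r; θ₂, θ₃)| ≤ 4θ₂((θ₃/r)¹² + (θ₃/r)⁶)`, the function is bounded below by
`c/r¹² - a/r⁶` with `a > 0`, and the hypothesis on `ε` says exactly that the repulsive
coefficient `c = 4(θ₂* θ₃*¹² - ε θ₂ θ₃¹²)` stays positive. Completing the square in `r⁻⁶`
gives `c/r¹² - a/r⁶ ≥ -min (a²/(4c)) (a/r⁶)`, and `ψ(r) = min (a²/(4c)) (a/r⁶)` is a valid
majorant: bounded near `0`, and `r ψ(r) ≤ a r⁻⁵` is integrable at infinity.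
-/

open MeasureTheory Set

lemma LowerRegular.mono {f g : ℝ → ℝ} (hf : LowerRegular f) (hfg : ∀ r > 0, f r ≤ g r) :
    LowerRegular g := by
  obtain ⟨ψ, hψ_pos, hψ_anti, hψ_int, hψf⟩ := hf
  exact ⟨ψ, hψ_pos, hψ_anti, hψ_int, fun r hr => (hψf r hr).trans (hfg r hr)⟩

lemma integrableOn_Ioi_mul_min_div_pow {M a : ℝ} (hM : 0 ≤ M) (ha : 0 ≤ a) {n : ℕ}
    (hn : 2 < n) : IntegrableOn (fun r : ℝ => r * min M (a / r ^ n)) (Ioi 0) := by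
  have hmeas : AEStronglyMeasurable (fun r : ℝ => r * min M (a / r ^ n)) volume := by
    fun_prop
  rw [← Ioc_union_Ioi_eq_Ioi zero_le_one]
  refine IntegrableOn.union ?_ ?_
  · refine IntegrableOn.of_bound measure_Ioc_lt_top hmeas.restrict M ?_
    filter_upwards [ae_restrict_mem measurableSet_Ioc] with r ⟨hr0, hr1⟩
    have hmin : 0 ≤ min M (a / r ^ n) := le_min hM (by positivity)
    rw [norm_mul, Real.norm_of_nonneg hr0.le, Real.norm_of_nonneg hmin]
    exact (mul_le_of_le_one_left hmin hr1).trans (min_le_left _ _)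
  · have hn' : (2 : ℝ) < n := by exact_mod_cast hn
    have hdom : IntegrableOn (fun r : ℝ => a * r ^ ((1 : ℝ) - n)) (Ioi 1) :=
      (integrableOn_Ioi_rpow_of_lt (by linarith) one_pos).const_mul a
    refine hdom.mono' hmeas.restrict ?_
    filter_upwards [ae_restrict_mem measurableSet_Ioi] with r hr
    have hr0 : (0 : ℝ) < r := zero_lt_one.trans hr
    have hmin : 0 ≤ min M (a / r ^ n) := le_min hM (by positivity)
    rw [norm_mul, Real.norm_of_nonneg hr0.le, Real.norm_of_nonneg hmin,
      Real.rpow_sub hr0, Real.rpow_one, Real.rpow_natCast]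
    calc r * min M (a / r ^ n) ≤ r * (a / r ^ n) := by gcongr; exact min_le_right _ _
      _ = a * (r / r ^ n) := by ring

lemma lowerRegular_of_neg_min_div_pow_le {f : ℝ → ℝ} {M a : ℝ} (hM : 0 < M) (ha : 0 < a)
    {n : ℕ} (hn : 2 < n) (hf : ∀ r > 0, -min M (a / r ^ n) ≤ f r) : LowerRegular f := by
  refine ⟨fun r => min M (a / r ^ n), fun r hr => lt_min hM (by positivity), ?_,
    integrableOn_Ioi_mul_min_div_pow hM.le ha.le hn, hf⟩
  intro r hr s hs hrs
  have hr0 : (0 : ℝ) < r := hr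
  exact min_le_min le_rfl (div_le_div_of_nonneg_left ha.le (by positivity) (by gcongr))

lemma mul_sub_mul_sq_le_sq_div {c : ℝ} (hc : 0 < c) (a y : ℝ) :
    a * y - c * y ^ 2 ≤ a ^ 2 / (4 * c) := by
  rw [le_div_iff₀ (by positivity)]
  nlinarith [sq_nonneg (2 * c * y - a)]

lemma lowerRegular_div_pow_two_mul_sub_div_pow {a c : ℝ} (ha : 0 < a) (hc : 0 < c) {n : ℕ}
    (hn : 2 < n) : LowerRegular (fun r => c / r ^ (2 * n) - a / r ^ n) := by
  refine lowerRegular_of_neg_min_div_pow_le (M := a ^ 2 / (4 * c)) (by positivity) ha hn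
    fun r hr => ?_
  have hcr : 0 ≤ c / r ^ (2 * n) := by positivity
  rw [neg_le, neg_sub]
  refine le_min ?_ (by linarith)
  have hsq : c / r ^ (2 * n) = c * ((r ^ n)⁻¹) ^ 2 := by
    rw [pow_mul', inv_pow, div_eq_mul_inv]
  rw [hsq, div_eq_mul_inv]
  exact mul_sub_mul_sq_le_sq_div hc a _

lemma abs_gLJ_le {θ₂ : ℝ} (hθ₂ : 0 ≤ θ₂) (θ₃ r : ℝ) :
    |gLJ θ₂ θ₃ r| ≤ 4 * θ₂ * ((θ₃ / r) ^ 12 + (θ₃ / r) ^ 6) := by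
  rw [gLJ, abs_mul, abs_of_nonneg (by positivity : 0 ≤ 4 * θ₂)]
  gcongr
  calc |(θ₃ / r) ^ 12 - (θ₃ / r) ^ 6| ≤ |(θ₃ / r) ^ 12| + |(θ₃ / r) ^ 6| := abs_sub _ _
    _ = (θ₃ / r) ^ 12 + (θ₃ / r) ^ 6 := by
      rw [abs_of_nonneg (by positivity), abs_of_nonneg (by positivity)]

lemma div_pow_sub_div_pow_le_gLJ_sub_mul_abs {θ₂ ε : ℝ} (hθ₂ : 0 ≤ θ₂) (hε : 0 ≤ ε)
    (θ₃ θ₂s θ₃s r : ℝ) :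
    4 * (θ₂s * θ₃s ^ 12 - ε * θ₂ * θ₃ ^ 12) / r ^ 12
        - 4 * (θ₂s * θ₃s ^ 6 + ε * θ₂ * θ₃ ^ 6) / r ^ 6
      ≤ gLJ θ₂s θ₃s r - ε * |gLJ θ₂ θ₃ r| := by
  have hε_abs := mul_le_mul_of_nonneg_left (abs_gLJ_le hθ₂ θ₃ r) hε
  have hexpand : 4 * (θ₂s * θ₃s ^ 12 - ε * θ₂ * θ₃ ^ 12) / r ^ 12
        - 4 * (θ₂s * θ₃s ^ 6 + ε * θ₂ * θ₃ ^ 6) / r ^ 6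
      = gLJ θ₂s θ₃s r - ε * (4 * θ₂ * ((θ₃ / r) ^ 12 + (θ₃ / r) ^ 6)) := by
    simp only [gLJ, div_eq_mul_inv, mul_pow, inv_pow]
    ring
  linarith

theorem stmt4 (θ₂ θ₃ θ₂s θ₃s ε : ℝ) (h2 : 0 < θ₂) (h3 : 0 < θ₃)
    (h2s : 0 < θ₂s) (h3s : 0 < θ₃s)
    (hε0 : 0 < ε) (hε : ε < (θ₃s / θ₃) ^ 12 * (θ₂s / θ₂)) :
    LowerRegular (fun r => gLJ θ₂s θ₃s r - ε * |gLJ θ₂ θ₃ r|) := by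
  have hc : 0 < 4 * (θ₂s * θ₃s ^ 12 - ε * θ₂ * θ₃ ^ 12) := by
    rw [div_pow, div_mul_div_comm, lt_div_iff₀ (by positivity)] at hε
    linarith
  have ha : 0 < 4 * (θ₂s * θ₃s ^ 6 + ε * θ₂ * θ₃ ^ 6) := by positivity
  exact (lowerRegular_div_pow_two_mul_sub_div_pow ha hc (n := 6) (by norm_num)).mono
    fun r _ => div_pow_sub_div_pow_le_gLJ_sub_mul_abs h2.le hε0.le θ₃ θ₂s θ₃s r
end

section
/- Let 0 < a ≤ b and 0 < ε < a. Then the function r ↦ 4a(a¹²/r¹² − b⁶/r⁶) − 4ε·|a¹²/r¹² − b⁶/r⁶| on (0,∞) is lower regular. -/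
/-!
The Lennard-Jones term `x(r) = a¹²/r¹² - b⁶/r⁶` is nonnegative for `r ≤ a²/b` and at least
`-b⁶/r⁶` everywhere, so `min (x r) 0 ≥ -b⁶ / max(r, a²/b)⁶`. Since `ε ≤ a`, the function
`4a·x - 4ε·|x|` is bounded below by `4(a + ε)·min x 0`, hence by `-ψ` with
`ψ r = 4(a + ε) b⁶ / max(r, a²/b)⁶`: a bounded, nonincreasing function decaying like `r⁻⁶`,
so `r·ψ r` is integrable on `(0, ∞)`.
-/

open MeasureTheory Set

section TruncatedInversePower

variable {C r₀ : ℝ} {n : ℕ}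

lemma antitone_div_max_pow (hC : 0 ≤ C) (hr₀ : 0 < r₀) :
    Antitone fun r : ℝ => C / max r r₀ ^ n := fun _ _ hxy =>
  div_le_div_of_nonneg_left hC (pow_pos (lt_max_of_lt_right hr₀) n)
    (pow_le_pow_left₀ (lt_max_of_lt_right hr₀).le (max_le_max_right r₀ hxy) n)

lemma integrableOn_Ioi_mul_div_max_pow (hr₀ : 0 < r₀) (hn : 2 < n) :
    IntegrableOn (fun r : ℝ => r * (C / max r r₀ ^ n)) (Ioi 0) := by
  rw [← Ioc_union_Ioi_eq_Ioi hr₀.le]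
  refine IntegrableOn.union ?_ ?_
  · have hcont : Continuous fun r : ℝ => r * (C / max r r₀ ^ n) :=
      continuous_id.mul <| continuous_const.div ((continuous_id.max continuous_const).pow n)
        fun r => (pow_pos (lt_max_of_lt_right hr₀) n).ne'
    exact hcont.integrableOn_Ioc
  · have hexp : (1 : ℝ) - n < -1 := by
      have : (2 : ℝ) < n := by exact_mod_cast hn
      linarith
    refine IntegrableOn.congr_fun ((integrableOn_Ioi_rpow_of_lt hexp hr₀).const_mul C)
      (fun r (hr : r₀ < r) => ?_) measurableSet_Ioi
    have hr0 : 0 < r := hr₀.trans hr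
    rw [max_eq_left hr.le, Real.rpow_sub hr0, Real.rpow_one, Real.rpow_natCast]
    field_simp

lemma lowerRegular_of_neg_div_max_pow_le {f : ℝ → ℝ} (hC : 0 < C) (hr₀ : 0 < r₀) (hn : 2 < n)
    (hf : ∀ r > 0, -(C / max r r₀ ^ n) ≤ f r) : LowerRegular f :=
  ⟨fun r => C / max r r₀ ^ n, fun _ _ => div_pos hC (pow_pos (lt_max_of_lt_right hr₀) n),
    (antitone_div_max_pow hC.le hr₀).antitoneOn _, integrableOn_Ioi_mul_div_max_pow hr₀ hn, hf⟩

end TruncatedInversePower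

lemma mul_min_zero_le_mul_sub_mul_abs {a ε : ℝ} (hε : ε ≤ a) (x : ℝ) :
    (a + ε) * min x 0 ≤ a * x - ε * |x| := by
  rcases le_or_gt 0 x with hx | hx
  · rw [min_eq_right hx, abs_of_nonneg hx]
    nlinarith [mul_nonneg (sub_nonneg.2 hε) hx]
  · rw [min_eq_left hx.le, abs_of_neg hx]
    linarith

lemma div_pow_six_le_div_pow_twelve {a b r : ℝ} (hr : 0 < r) (hb : 0 ≤ b) (hbr : b * r ≤ a ^ 2) :
    b ^ 6 / r ^ 6 ≤ a ^ 12 / r ^ 12 :=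
  calc b ^ 6 / r ^ 6 = (b * r) ^ 6 / r ^ 12 := by field_simp
    _ ≤ (a ^ 2) ^ 6 / r ^ 12 := by gcongr
    _ = a ^ 12 / r ^ 12 := by ring

lemma neg_div_max_pow_six_le_min_zero {a b r : ℝ} (hb : 0 < b) (hr : 0 < r) :
    -(b ^ 6 / max r (a ^ 2 / b) ^ 6) ≤ min (a ^ 12 / r ^ 12 - b ^ 6 / r ^ 6) 0 := by
  rcases le_or_gt r (a ^ 2 / b) with hle | hgt
  · have hbr : b * r ≤ a ^ 2 := by rw [le_div_iff₀ hb] at hle; linarith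
    rw [min_eq_right (sub_nonneg.2 (div_pow_six_le_div_pow_twelve hr hb.le hbr))]
    have : 0 < max r (a ^ 2 / b) := lt_max_of_lt_left hr
    rw [neg_nonpos]
    positivity
  · rw [max_eq_left hgt.le]
    refine le_min ?_ (by rw [neg_nonpos]; positivity)
    have : 0 ≤ a ^ 12 / r ^ 12 := by positivity
    linarith

theorem stmt5 (a b ε : ℝ) (ha : 0 < a) (hab : a ≤ b) (hε0 : 0 < ε) (hε : ε < a) :
    LowerRegular (fun r =>
      4 * a * (a ^ 12 / r ^ 12 - b ^ 6 / r ^ 6) -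
        4 * ε * |a ^ 12 / r ^ 12 - b ^ 6 / r ^ 6|) := by
  have hb : 0 < b := ha.trans_le hab
  have hr₀ : 0 < a ^ 2 / b := by positivity
  refine lowerRegular_of_neg_div_max_pow_le (C := 4 * (a + ε) * b ^ 6) (by positivity) hr₀
    (by norm_num : 2 < 6) fun r hr => ?_
  set x := a ^ 12 / r ^ 12 - b ^ 6 / r ^ 6
  calc -(4 * (a + ε) * b ^ 6 / max r (a ^ 2 / b) ^ 6)
      = 4 * (a + ε) * -(b ^ 6 / max r (a ^ 2 / b) ^ 6) := by ring
    _ ≤ 4 * ((a + ε) * min x 0) := by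
      rw [mul_assoc]
      gcongr
      exact neg_div_max_pow_six_le_min_zero hb hr
    _ ≤ 4 * (a * x - ε * |x|) := by gcongr; exact mul_min_zero_le_mul_sub_mul_abs hε.le x
    _ = 4 * a * x - 4 * ε * |x| := by ring
end

section
/- Let θ₂, θ₃ > 0 and 0 < ε < θ₃²/132. Then the function r ↦ g(r; θ₂, θ₃) − 4εθ₂·|132θ₃¹⁰/r¹² − 30θ₃⁴/r⁶| on (0,∞) is lower regular. -/
/-!
Dropping the absolute value (`|x - y| ≤ x + y` for `x, y ≥ 0`) bounds the function from below
by `a t² - C t` with `t = r⁻⁶`, `C > 0`, and `a > 0` exactly because `ε < θ₃² / 132`.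
Such a quadratic is at least `-C²/(4a)` and at least `-C t`, so `ψ r = min (C²/(4a)) (C r⁻⁶)`
works: it is bounded near `0`, and `r ψ(r) ≤ C r⁻⁵` is integrable at infinity.
-/

open MeasureTheory Set

section PowerTail

variable {B C : ℝ} {p : ℕ}

lemma antitoneOn_min_const_mul_inv_pow (hC : 0 ≤ C) :
    AntitoneOn (fun r : ℝ => min B (C * (r ^ p)⁻¹)) (Ioi 0) := by
  intro x hx y _ hxy
  exact min_le_min_left B
    (mul_le_mul_of_nonneg_left (inv_anti₀ (pow_pos hx p) (pow_le_pow_left₀ hx.le hxy p)) hC)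

lemma integrableOn_Ioi_mul_min_const_mul_inv_pow (hB : 0 ≤ B) (hC : 0 ≤ C) (hp : 2 < p) :
    IntegrableOn (fun r : ℝ => r * min B (C * (r ^ p)⁻¹)) (Ioi 0) := by
  have hmeas : Measurable (fun r : ℝ => r * min B (C * (r ^ p)⁻¹)) := by fun_prop
  rw [← Ioc_union_Ioi_eq_Ioi zero_le_one]
  refine IntegrableOn.union ?_ ?_
  · refine Integrable.mono' (integrableOn_const measure_Ioc_lt_top.ne)
      hmeas.aestronglyMeasurable.restrict ?_
    filter_upwards [ae_restrict_mem measurableSet_Ioc] with r ⟨hr0, hr1⟩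
    rw [Real.norm_eq_abs, abs_of_nonneg (by positivity)]
    calc r * min B (C * (r ^ p)⁻¹) ≤ 1 * B := by gcongr; exact min_le_left _ _
      _ = B := one_mul B
  · have hexp : (1 : ℝ) - p < -1 := by
      have : (2 : ℝ) < p := by exact_mod_cast hp
      linarith
    refine Integrable.mono' ((integrableOn_Ioi_rpow_of_lt hexp one_pos).const_mul C)
      hmeas.aestronglyMeasurable.restrict ?_
    filter_upwards [ae_restrict_mem measurableSet_Ioi] with r hr
    have hr0 : (0 : ℝ) < r := one_pos.trans hr
    rw [Real.norm_eq_abs, abs_of_nonneg (by positivity), Real.rpow_sub hr0, Real.rpow_one,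
      Real.rpow_natCast]
    calc r * min B (C * (r ^ p)⁻¹) ≤ r * (C * (r ^ p)⁻¹) := by gcongr; exact min_le_right _ _
      _ = C * (r / r ^ p) := by ring

lemma lowerRegular_of_neg_min_le {f : ℝ → ℝ} (hB : 0 < B) (hC : 0 < C) (hp : 2 < p)
    (hf : ∀ r > 0, -min B (C * (r ^ p)⁻¹) ≤ f r) : LowerRegular f :=
  ⟨fun r => min B (C * (r ^ p)⁻¹), fun _ hr => lt_min hB (by positivity),
    antitoneOn_min_const_mul_inv_pow hC.le,
    integrableOn_Ioi_mul_min_const_mul_inv_pow hB.le hC.le hp, hf⟩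

end PowerTail

lemma neg_min_le_mul_sq_sub_mul {a C t : ℝ} (ha : 0 < a) :
    -min (C ^ 2 / (4 * a)) (C * t) ≤ a * t ^ 2 - C * t := by
  refine neg_le.mpr (le_min ?_ ?_)
  · rw [le_div_iff₀ (by positivity)]
    nlinarith [sq_nonneg (2 * a * t - C)]
  · nlinarith [sq_nonneg t]

lemma mul_sq_sub_mul_le_gLJ_sub_abs {θ₂ θ₃ ε : ℝ} (hθ₂ : 0 ≤ θ₂) (hε : 0 ≤ ε) (r : ℝ) :
    4 * θ₂ * (θ₃ ^ 12 - 132 * ε * θ₃ ^ 10) * ((r ^ 6)⁻¹) ^ 2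
        - 4 * θ₂ * (θ₃ ^ 6 + 30 * ε * θ₃ ^ 4) * (r ^ 6)⁻¹ ≤
      gLJ θ₂ θ₃ r - 4 * ε * θ₂ * |132 * θ₃ ^ 10 / r ^ 12 - 30 * θ₃ ^ 4 / r ^ 6| := by
  have habs : |132 * θ₃ ^ 10 / r ^ 12 - 30 * θ₃ ^ 4 / r ^ 6|
      ≤ 132 * θ₃ ^ 10 / r ^ 12 + 30 * θ₃ ^ 4 / r ^ 6 := by
    refine (abs_sub _ _).trans_eq ?_
    rw [abs_of_nonneg (by positivity), abs_of_nonneg (by positivity)]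
  calc _ = gLJ θ₂ θ₃ r - 4 * ε * θ₂ * (132 * θ₃ ^ 10 / r ^ 12 + 30 * θ₃ ^ 4 / r ^ 6) := by
        unfold gLJ; ring
    _ ≤ _ := by gcongr

theorem stmt8 (θ₂ θ₃ ε : ℝ) (h2 : 0 < θ₂) (h3 : 0 < θ₃)
    (hε0 : 0 < ε) (hε : ε < θ₃ ^ 2 / 132) :
    LowerRegular (fun r =>
      gLJ θ₂ θ₃ r - 4 * ε * θ₂ * |132 * θ₃ ^ 10 / r ^ 12 - 30 * θ₃ ^ 4 / r ^ 6|) := by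
  set a := 4 * θ₂ * (θ₃ ^ 12 - 132 * ε * θ₃ ^ 10)
  set C := 4 * θ₂ * (θ₃ ^ 6 + 30 * ε * θ₃ ^ 4)
  have ha : 0 < a := by
    have hgap : 0 < θ₃ ^ 2 - 132 * ε := by linarith
    have : a = 4 * θ₂ * θ₃ ^ 10 * (θ₃ ^ 2 - 132 * ε) := by ring
    rw [this]
    positivity
  exact lowerRegular_of_neg_min_le (B := C ^ 2 / (4 * a)) (C := C) (p := 6) (by positivity)
    (by positivity) (by norm_num) fun r _ =>
    (neg_min_le_mul_sq_sub_mul ha).trans (mul_sq_sub_mul_le_gLJ_sub_abs h2.le hε0.le r)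
end

section
/- Let θ₂, θ₃, θ₂', θ₃' > 0 and let 0 < r₁ < r₂. If g(r₁; θ₂, θ₃) = g(r₁; θ₂', θ₃') and g(r₂; θ₂, θ₃) = g(r₂; θ₂', θ₃'), then θ₂ = θ₂' and θ₃ = θ₃'. In particular, the map (θ₂, θ₃) ↦ g(·; θ₂, θ₃) from (0,∞)² to functions on (0,∞) is injective, and agreement at any two distinct positive radii suffices. -/
/-!
Clearing denominators, `r ^ 12 * g(r; θ₂, θ₃) / 4 = A - B r⁶` with `A = θ₂ θ₃¹²` and
`B = θ₂ θ₃⁶`, an affine function of `r⁶`. Agreement at two radii with distinct sixth powers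
therefore forces equal coefficients `A` and `B`, and these determine the parameters:
`θ₃⁶ = A / B`, after which `θ₂ = B / θ₃⁶`.
-/

theorem eq_and_eq_of_sub_mul_eq_sub_mul {K : Type*} [Field K] {a b a' b' s₁ s₂ : K}
    (hs : s₁ ≠ s₂) (h₁ : a - b * s₁ = a' - b' * s₁) (h₂ : a - b * s₂ = a' - b' * s₂) :
    a = a' ∧ b = b' := by
  have hb : b = b' := by
    have h : (b - b') * (s₂ - s₁) = 0 := by linear_combination h₁ - h₂
    rcases mul_eq_zero.mp h with h | h
    · exact sub_eq_zero.mp h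
    · exact absurd (sub_eq_zero.mp h).symm hs
  exact ⟨by linear_combination h₁ + s₁ * hb, hb⟩

theorem gLJ_mul_pow_twelve (θ₂ θ₃ : ℝ) {r : ℝ} (hr : r ≠ 0) :
    gLJ θ₂ θ₃ r * r ^ 12 / 4 = θ₂ * θ₃ ^ 12 - θ₂ * θ₃ ^ 6 * r ^ 6 := by
  unfold gLJ
  field_simp

theorem gLJ_coeffs_eq_of_eq_of_eq {θ₂ θ₃ θ₂' θ₃' r₁ r₂ : ℝ} (hr₁ : r₁ ≠ 0) (hr₂ : r₂ ≠ 0)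
    (hr : r₁ ^ 6 ≠ r₂ ^ 6) (e₁ : gLJ θ₂ θ₃ r₁ = gLJ θ₂' θ₃' r₁)
    (e₂ : gLJ θ₂ θ₃ r₂ = gLJ θ₂' θ₃' r₂) :
    θ₂ * θ₃ ^ 12 = θ₂' * θ₃' ^ 12 ∧ θ₂ * θ₃ ^ 6 = θ₂' * θ₃' ^ 6 := by
  refine eq_and_eq_of_sub_mul_eq_sub_mul hr ?_ ?_
  · rw [← gLJ_mul_pow_twelve _ _ hr₁, ← gLJ_mul_pow_twelve _ _ hr₁, e₁]
  · rw [← gLJ_mul_pow_twelve _ _ hr₂, ← gLJ_mul_pow_twelve _ _ hr₂, e₂]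

theorem eq_and_eq_of_mul_pow_eq_of_mul_pow_eq {θ₂ θ₃ θ₂' θ₃' : ℝ} (h₂ : θ₂ ≠ 0) (h₃ : 0 < θ₃)
    (h₃' : 0 ≤ θ₃') (hA : θ₂ * θ₃ ^ 12 = θ₂' * θ₃' ^ 12) (hB : θ₂ * θ₃ ^ 6 = θ₂' * θ₃' ^ 6) :
    θ₂ = θ₂' ∧ θ₃ = θ₃' := by
  have hB₀ : θ₂ * θ₃ ^ 6 ≠ 0 := mul_ne_zero h₂ (pow_ne_zero 6 h₃.ne')
  have h₆ : θ₃ ^ 6 = θ₃' ^ 6 := by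
    refine mul_left_cancel₀ hB₀ ?_
    calc θ₂ * θ₃ ^ 6 * θ₃ ^ 6 = θ₂ * θ₃ ^ 12 := by ring
      _ = θ₂' * θ₃' ^ 12 := hA
      _ = θ₂ * θ₃ ^ 6 * θ₃' ^ 6 := by rw [hB]; ring
  have h₃eq : θ₃ = θ₃' := (pow_left_inj₀ h₃.le h₃' (by norm_num)).mp h₆
  subst h₃eq
  exact ⟨mul_right_cancel₀ (pow_ne_zero 6 h₃.ne') hB, rfl⟩

theorem stmt10_general (θ₂ θ₃ θ₂' θ₃' r₁ r₂ : ℝ) (h2 : 0 < θ₂) (h3 : 0 < θ₃)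
    (h3' : 0 < θ₃') (hr₁ : 0 < r₁) (hr : r₁ < r₂)
    (e1 : gLJ θ₂ θ₃ r₁ = gLJ θ₂' θ₃' r₁) (e2 : gLJ θ₂ θ₃ r₂ = gLJ θ₂' θ₃' r₂) :
    θ₂ = θ₂' ∧ θ₃ = θ₃' := by
  have hr₆ : r₁ ^ 6 ≠ r₂ ^ 6 := (pow_lt_pow_left₀ hr hr₁.le (by norm_num)).ne
  obtain ⟨hA, hB⟩ := gLJ_coeffs_eq_of_eq_of_eq hr₁.ne' (hr₁.trans hr).ne' hr₆ e1 e2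
  exact eq_and_eq_of_mul_pow_eq_of_mul_pow_eq h2.ne' h3 h3'.le hA hB

theorem stmt10 (θ₂ θ₃ θ₂' θ₃' r₁ r₂ : ℝ) (h2 : 0 < θ₂) (h3 : 0 < θ₃)
    (h2' : 0 < θ₂') (h3' : 0 < θ₃') (hr₁ : 0 < r₁) (hr : r₁ < r₂)
    (e1 : gLJ θ₂ θ₃ r₁ = gLJ θ₂' θ₃' r₁) (e2 : gLJ θ₂ θ₃ r₂ = gLJ θ₂' θ₃' r₂) :
    θ₂ = θ₂' ∧ θ₃ = θ₃' :=
  stmt10_general θ₂ θ₃ θ₂' θ₃' r₁ r₂ h2 h3 h3' hr₁ hr e1 e2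
end

section
/- Let θ₂, θ₃ > 0, let r₁, r₂ > 0 with r₁ ≠ r₂, and let y₂, y₃ ∈ ℝ. If y₂·4((θ₃/r)¹² − (θ₃/r)⁶) + y₃·4θ₂(12θ₃¹¹/r¹² − 6θ₃⁵/r⁶) = 0 for both r = r₁ and r = r₂, then y₂ = 0 and y₃ = 0. -/
/-! Clearing denominators, the pairing of `(y₂, y₃)` with the parameter gradient of the
Lennard-Jones potential at `r` vanishes iff `A θ₃⁶ = B r⁶`, where `A = y₂θ₃ + 12y₃θ₂` and
`B = y₂θ₃ + 6y₃θ₂`. Since `r ↦ r⁶` is injective on `r > 0`, two distinct radii force `B = 0`,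
hence `A = 0`, and this triangular system gives `y₂ = y₃ = 0`. -/

lemma lennardJones_grad_pairing_eq {K : Type*} [Field K] (θ₂ θ₃ r y₂ y₃ : K) (hr : r ≠ 0) :
    y₂ * (4 * ((θ₃ / r) ^ 12 - (θ₃ / r) ^ 6)) +
        y₃ * (4 * θ₂ * (12 * θ₃ ^ 11 / r ^ 12 - 6 * θ₃ ^ 5 / r ^ 6)) =
      4 * θ₃ ^ 5 / r ^ 12 *
        ((y₂ * θ₃ + 12 * y₃ * θ₂) * θ₃ ^ 6 - (y₂ * θ₃ + 6 * y₃ * θ₂) * r ^ 6) := by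
  field_simp
  ring

lemma lennardJones_grad_pairing_eq_zero_iff {K : Type*} [Field K] [NeZero (4 : K)]
    {θ₂ θ₃ r y₂ y₃ : K} (hθ₃ : θ₃ ≠ 0) (hr : r ≠ 0) :
    y₂ * (4 * ((θ₃ / r) ^ 12 - (θ₃ / r) ^ 6)) +
        y₃ * (4 * θ₂ * (12 * θ₃ ^ 11 / r ^ 12 - 6 * θ₃ ^ 5 / r ^ 6)) = 0 ↔
      (y₂ * θ₃ + 12 * y₃ * θ₂) * θ₃ ^ 6 = (y₂ * θ₃ + 6 * y₃ * θ₂) * r ^ 6 := by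
  have hprefactor : 4 * θ₃ ^ 5 / r ^ 12 ≠ 0 := by simp [hθ₃, hr, NeZero.ne]
  rw [lennardJones_grad_pairing_eq θ₂ θ₃ r y₂ y₃ hr, mul_eq_zero, or_iff_right hprefactor,
    sub_eq_zero]

theorem stmt14 (θ₂ θ₃ r₁ r₂ y₂ y₃ : ℝ) (h2 : 0 < θ₂) (h3 : 0 < θ₃)
    (hr₁ : 0 < r₁) (hr₂ : 0 < r₂) (hne : r₁ ≠ r₂)
    (h1 : y₂ * (4 * ((θ₃ / r₁) ^ 12 - (θ₃ / r₁) ^ 6)) +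
        y₃ * (4 * θ₂ * (12 * θ₃ ^ 11 / r₁ ^ 12 - 6 * θ₃ ^ 5 / r₁ ^ 6)) = 0)
    (h2' : y₂ * (4 * ((θ₃ / r₂) ^ 12 - (θ₃ / r₂) ^ 6)) +
        y₃ * (4 * θ₂ * (12 * θ₃ ^ 11 / r₂ ^ 12 - 6 * θ₃ ^ 5 / r₂ ^ 6)) = 0) :
    y₂ = 0 ∧ y₃ = 0 := by
  have e₁ := (lennardJones_grad_pairing_eq_zero_iff h3.ne' hr₁.ne').1 h1
  have e₂ := (lennardJones_grad_pairing_eq_zero_iff h3.ne' hr₂.ne').1 h2'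
  have hpow : r₁ ^ 6 ≠ r₂ ^ 6 := by
    rwa [Ne, pow_left_inj₀ hr₁.le hr₂.le (by norm_num)]
  have hB : y₂ * θ₃ + 6 * y₃ * θ₂ = 0 :=
    (mul_eq_mul_left_iff.1 (e₁.symm.trans e₂)).resolve_left hpow
  have hA : y₂ * θ₃ + 12 * y₃ * θ₂ = 0 := by
    simpa [hB, h3.ne'] using e₁
  have hy₃θ₂ : y₃ * θ₂ = 0 := by linear_combination (hA - hB) / 6
  have hy₂θ₃ : y₂ * θ₃ = 0 := by linear_combination 2 * hB - hA
  exact ⟨(mul_eq_zero.1 hy₂θ₃).resolve_right h3.ne', (mul_eq_zero.1 hy₃θ₂).resolve_right h2.ne'⟩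
end
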